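/- For positive integers c, n, m with 3 ≤ m ≤ n, one has S(c·2^n + 2^{m−1}, 2^m) ≡ 3 (mod 4). -/

import Mathlib

/-- Stirling numbers of the second kind -/
def stirling : ℕ → ℕ → ℕ
  | 0, 0 => 1
  | 0, _ + 1 => 0
  | _ + 1, 0 => 0
  | n + 1, k + 1 => stirling n k + (k + 1) * stirling n (k + 1)

/-!
Modulo 4, the generating function `x ^ k / ∏_{j=1}^{k} (1 - j x)` of `S(·, k)` collapses for
`k = 2 ^ m` with `m ≥ 3`. The factors are 4-periodic and
`(1 - x)(1 - 2x)(1 - 3x)(1 - 4x) ≡ (1 - x²)(1 - 2x)`; since `(a + 2b)² ≡ a²`, the product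
becomes `(1 + w)²` with `w = x ^ (2 ^ (m - 2))`. Hence
`∑ S(N, 2 ^ m) x ^ N ≡ w ^ 4 / (1 + w) ^ 2 = ∑ (-1) ^ i (i + 1) w ^ (i + 4)`, and
`c 2 ^ n + 2 ^ (m - 1)` is the exponent of `w ^ (i + 4)` for an `i ≡ 2 (mod 4)`.
-/

open PowerSeries Finset

section GeneratingFunction

variable (R : Type*) [CommRing R]

noncomputable def stirlingSeries (k : ℕ) : R⟦X⟧ := mk fun n => (stirling n k : R)

theorem stirlingSeries_zero : stirlingSeries R 0 = 1 := by
  ext (_ | n) <;> simp [stirlingSeries, stirling, coeff_one]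

theorem one_sub_mul_stirlingSeries_succ (k : ℕ) :
    (1 - (k + 1 : R⟦X⟧) * X) * stirlingSeries R (k + 1) = X * stirlingSeries R k := by
  ext (_ | n)
  · simp [stirlingSeries, stirling]
  · have hrec : stirling (n + 1) (k + 1) = stirling n k + (k + 1) * stirling n (k + 1) := rfl
    have hC : (k + 1 : R⟦X⟧) = C (k + 1 : R) := by simp
    rw [sub_mul, one_mul, map_sub, mul_assoc, hC, coeff_C_mul, coeff_succ_X_mul, coeff_succ_X_mul]
    simp [stirlingSeries, hrec]

theorem prod_one_sub_mul_stirlingSeries (k : ℕ) :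
    (∏ j ∈ range k, (1 - (j + 1 : R⟦X⟧) * X)) * stirlingSeries R k = X ^ k := by
  induction k with
  | zero => simp [stirlingSeries_zero]
  | succ k ih =>
    rw [prod_range_succ, mul_assoc, one_sub_mul_stirlingSeries_succ, pow_succ, ← ih]
    ring

end GeneratingFunction

section CharFour

variable {S : Type*} [CommRing S] (h4 : (4 : S) = 0)
include h4

theorem add_two_mul_sq (a b : S) : (a + 2 * b) ^ 2 = a ^ 2 := by
  linear_combination (a * b + b ^ 2) * h4

theorem one_sub_pow_two_pow_succ (y : S) (j : ℕ) :
    (1 - y) ^ 2 ^ (j + 1) = (1 + y ^ 2 ^ j) ^ 2 := by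
  induction j with
  | zero => linear_combination (-y) * h4
  | succ j ih =>
    rw [pow_succ 2 (j + 1), pow_mul, ih, pow_succ 2 j, pow_mul,
      show (1 + y ^ 2 ^ j) ^ 2 = 1 + (y ^ 2 ^ j) ^ 2 + 2 * y ^ 2 ^ j by ring, add_two_mul_sq h4]

theorem prod_range_four_mul (x : S) (r : ℕ) :
    ∏ j ∈ range (4 * r), (1 - (j + 1 : S) * x) = ((1 - x ^ 2) * (1 - 2 * x)) ^ r := by
  induction r with
  | zero => simp
  | succ r ih =>
    simp only [Nat.mul_succ, prod_range_succ, ih, Nat.cast_add, Nat.cast_mul, Nat.cast_ofNat, h4,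
      zero_mul]
    linear_combination
      ((1 - x ^ 2) * (1 - 2 * x)) ^ r * (1 - 2 * x) * (-2 * x + 5 * x ^ 2 - 3 * x ^ 3) * h4

theorem prod_range_two_pow (x : S) {m : ℕ} (hm : 3 ≤ m) :
    ∏ j ∈ range (2 ^ m), (1 - (j + 1 : S) * x) = (1 + x ^ 2 ^ (m - 2)) ^ 2 := by
  obtain ⟨a, rfl⟩ : ∃ a, m = a + 3 := ⟨m - 3, by omega⟩
  rw [show 2 ^ (a + 3) = 4 * 2 ^ (a + 1) by ring, prod_range_four_mul h4, mul_pow,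
    one_sub_pow_two_pow_succ h4, pow_succ' 2 a, pow_mul (1 - 2 * x),
    show (1 - 2 * x) ^ 2 = 1 by linear_combination (x ^ 2 - x) * h4, one_pow, mul_one, ← pow_mul,
    ← pow_succ', Nat.add_sub_assoc (by norm_num)]

end CharFour

section Inversion

variable {R : Type*} [CommRing R]

theorem one_add_X_sq_mul_mk_neg_one_pow_mul_succ :
    (1 + X) ^ 2 * mk (fun n => (-1) ^ n * (n + 1 : R)) = 1 := by
  have hmk : mk (fun n => (-1) ^ n * (n + 1 : R)) = rescale (-1) (invOneSubPow R 2).val := by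
    ext n
    simp [invOneSubPow_val_succ_eq_mk_add_choose, add_comm]
  have hX : (1 + X : R⟦X⟧) = rescale (-1) (1 - X) := by
    simp [rescale_X, sub_eq_add_neg]
  rw [hmk, hX, ← map_pow, ← map_mul, ← invOneSubPow_inv_eq_one_sub_pow, Units.inv_val, map_one]

theorem coeff_mul_add_eq_of_one_add_X_pow_sq_mul_eq {A j : ℕ} (hA : A ≠ 0) {f : R⟦X⟧}
    (hf : (1 + X ^ A) ^ 2 * f = X ^ j) (i : ℕ) :
    coeff (A * i + j) f = (-1) ^ i * (i + 1) := by
  set g := expand A hA (mk fun n => (-1) ^ n * (n + 1 : R))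
  have hg : (1 + X ^ A) ^ 2 * g = 1 := by
    rw [← expand_X A hA, ← map_one (expand A hA), ← map_add, ← map_pow, ← map_mul,
      one_add_X_sq_mul_mk_neg_one_pow_mul_succ]
  have hfg : f = X ^ j * g := by
    calc f = (1 + X ^ A) ^ 2 * f * g := by rw [mul_right_comm, hg, one_mul]
      _ = X ^ j * g := by rw [hf]
  rw [hfg, coeff_X_pow_mul, coeff_expand_mul, coeff_mk]

end Inversion

theorem cast_stirling_two_pow_mul_add_four {m : ℕ} (hm : 3 ≤ m) (i : ℕ) :
    (stirling (2 ^ (m - 2) * (i + 4)) (2 ^ m) : ZMod 4) = (-1) ^ i * (i + 1) := by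
  have h4 : (4 : (ZMod 4)⟦X⟧) = 0 := by
    rw [← map_ofNat C 4, show (4 : ZMod 4) = 0 from rfl, map_zero]
  have hgen := prod_one_sub_mul_stirlingSeries (ZMod 4) (2 ^ m)
  rw [prod_range_two_pow h4 X hm] at hgen
  have hcoeff := coeff_mul_add_eq_of_one_add_X_pow_sq_mul_eq (by positivity) hgen i
  have hN : 2 ^ (m - 2) * i + 2 ^ m = 2 ^ (m - 2) * (i + 4) := by
    rw [← pow_sub_mul_pow 2 (by omega : 2 ≤ m)]
    ring
  rwa [hN, stirlingSeries, coeff_mk] at hcoeff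

theorem stirling_shift_mod_four (c n m : ℕ) (hc : 0 < c) (hm : 3 ≤ m) (hmn : m ≤ n) :
    stirling (c * 2 ^ n + 2 ^ (m - 1)) (2 ^ m) ≡ 3 [MOD 4] := by
  obtain ⟨t, ht⟩ : ∃ t, c * 2 ^ (n - m) = t + 1 :=
    ⟨_, (Nat.succ_pred_eq_of_pos (by positivity)).symm⟩
  have hN : c * 2 ^ n + 2 ^ (m - 1) = 2 ^ (m - 2) * (4 * t + 2 + 4) := by
    obtain ⟨a, rfl⟩ : ∃ a, m = a + 3 := ⟨m - 3, by omega⟩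
    obtain ⟨d, rfl⟩ : ∃ d, n = a + 3 + d := ⟨n - (a + 3), by omega⟩
    simp only [Nat.add_sub_cancel_left, show a + 3 - 1 = a + 2 by omega,
      show a + 3 - 2 = a + 1 by omega] at ht ⊢
    linear_combination 2 ^ (a + 3) * ht
  rw [← ZMod.natCast_eq_natCast_iff, hN, cast_stirling_two_pow_mul_add_four hm,
    Even.neg_one_pow ⟨2 * t + 1, by ring⟩]
  have h4 : (4 : ZMod 4) = 0 := rfl
  push_cast
  linear_combination (t : ZMod 4) * h4
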